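/- Let f be holomorphic on the closed right half-plane Re(z) ≥ 0, satisfying |f(z)| ≤ A · exp(τ|z|) there for some constants A > 0 and 0 ≤ τ < π. If f(n) = 0 for every nonnegative integer n, then f is identically zero on the right half-plane. -/

import Mathlib

/-!
Dividing `f (z + 1)` by `sin (π z)` gives a function `G`, holomorphic on a neighbourhood of the
closed right half-plane, of exponential type there (near the integers, where `sin (π z)` is small,
by the maximum modulus principle on discs of radius `1/4`) and decaying like `exp (-(π - τ) |y|)`
on the imaginary axis, where `|sin (π i y)|` grows like `exp (π |y|)`. With `ε π / 2 = π - τ`,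
the function `exp (-ε z log (1 + z)) G z` is bounded on the imaginary axis, of exponential type in
the half-plane and decays superexponentially on the positive real axis, so it vanishes by
Phragmén–Lindelöf. Hence `f = 0` on `1 ≤ re z`, and on the whole closed half-plane by the identity
theorem and continuity.
-/

open Complex Set Filter Asymptotics Metric Topology
open scoped Real

lemma Complex.norm_sin_sq (z : ℂ) :
    ‖sin z‖ ^ 2 = Real.sin z.re ^ 2 + Real.sinh z.im ^ 2 := by
  conv_lhs => rw [← re_add_im z, sin_add_mul_I]
  rw [← ofReal_sin, ← ofReal_cos, ← ofReal_cosh, ← ofReal_sinh, ← ofReal_mul, ← ofReal_mul,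
    Complex.sq_norm, normSq_add_mul_I]
  nlinarith [Real.cosh_sq z.im, Real.sin_sq_add_cos_sq z.re]

lemma Complex.abs_sinh_im_le_norm_sin (z : ℂ) : |Real.sinh z.im| ≤ ‖sin z‖ :=
  (pow_le_pow_iff_left₀ (abs_nonneg _) (norm_nonneg _) two_ne_zero).1 <| by
    rw [sq_abs, z.norm_sin_sq]
    nlinarith [sq_nonneg (Real.sin z.re)]

lemma Real.exp_abs_div_four_le_abs_sinh {t : ℝ} (ht : 1 ≤ |t|) : rexp |t| / 4 ≤ |Real.sinh t| := by
  rw [Real.abs_sinh, Real.sinh_eq]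
  have h1 : rexp (-|t|) ≤ 1 := Real.exp_le_one_iff.2 (by linarith)
  have h2 : 2 ≤ rexp |t| := by linarith [Real.add_one_le_exp |t|]
  linarith

lemma Complex.sin_pi_mul_eq_zero_iff {z : ℂ} : sin (π * z) = 0 ↔ ∃ k : ℤ, z = k := by
  have hπ : (π : ℂ) ≠ 0 := ofReal_ne_zero.2 Real.pi_ne_zero
  simp only [sin_eq_zero_iff, mul_comm (π : ℂ) z]
  exact exists_congr fun k => mul_left_inj' hπ

lemma Real.two_mul_abs_le_abs_sin_pi_mul {x : ℝ} (hx : |x| ≤ 1 / 2) :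
    2 * |x| ≤ |Real.sin (π * x)| := by
  have key : ∀ t : ℝ, 0 ≤ t → t ≤ 1 / 2 → 2 * t ≤ Real.sin (π * t) := fun t h0 h1 => by
    have := Real.mul_le_sin (by positivity) (by nlinarith [Real.pi_pos] : π * t ≤ π / 2)
    rwa [← mul_assoc, div_mul_cancel₀ _ Real.pi_ne_zero] at this
  rcases le_total 0 x with h | h
  · rw [abs_of_nonneg h]
    exact (key x h (by rwa [abs_of_nonneg h] at hx)).trans (le_abs_self _)
  · rw [abs_of_nonpos h]
    have := key (-x) (by linarith) (by rwa [abs_of_nonpos h] at hx)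
    rw [mul_neg, mul_neg, Real.sin_neg] at this
    linarith [neg_le_abs (Real.sin (π * x))]

lemma Real.sin_pi_mul_sub_round_sq (x : ℝ) :
    Real.sin (π * (x - round x)) ^ 2 = Real.sin (π * x) ^ 2 := by
  have : π * x = π * (x - round x) + round x * π := by ring
  rw [this, Real.sin_add_int_mul_pi, mul_pow, ← sq_abs ((-1 : ℝ) ^ round x), abs_neg_one_zpow,
    one_pow, one_mul]

lemma Complex.half_le_norm_sin_pi_mul {z : ℂ} (hz : ∀ n : ℤ, 1 / 4 ≤ ‖z - n‖) :
    1 / 2 ≤ ‖sin (π * z)‖ := by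
  set d := z.re - round z.re
  have hdist : 1 / 16 ≤ d ^ 2 + z.im ^ 2 := by
    have h := pow_le_pow_left₀ (by norm_num) (hz (round z.re)) 2
    rw [Complex.sq_norm, normSq_apply] at h
    simp only [sub_re, intCast_re, sub_im, intCast_im, sub_zero] at h
    nlinarith
  have hsin : 4 * d ^ 2 ≤ Real.sin (π * d) ^ 2 := by
    have := Real.two_mul_abs_le_abs_sin_pi_mul (abs_sub_round z.re)
    nlinarith [sq_abs d, sq_abs (Real.sin (π * d)), abs_nonneg d]
  have hsinh : 4 * z.im ^ 2 ≤ Real.sinh (π * z.im) ^ 2 := by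
    have h1 : π * |z.im| ≤ Real.sinh (π * |z.im|) := Real.self_le_sinh_iff.2 (by positivity)
    rw [← abs_of_pos Real.pi_pos, ← abs_mul, ← Real.abs_sinh] at h1
    have h2 := sq_le_sq.2 h1
    rw [mul_pow] at h2
    nlinarith [mul_le_mul_of_nonneg_right (by nlinarith [Real.pi_gt_three] : (4 : ℝ) ≤ π ^ 2)
      (sq_nonneg z.im)]
  have hsq : (1 / 2) ^ 2 ≤ ‖sin (π * z)‖ ^ 2 := by
    rw [norm_sin_sq, re_ofReal_mul, im_ofReal_mul, ← Real.sin_pi_mul_sub_round_sq]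
    nlinarith
  exact (pow_le_pow_iff_left₀ (by norm_num) (norm_nonneg _) two_ne_zero).1 hsq

lemma exists_differentiableOn_mul_eq_of_simple_zeros {g s : ℂ → ℂ} {U : Set ℂ} (hU : IsOpen U)
    (hg : DifferentiableOn ℂ g U) (hs : DifferentiableOn ℂ s U)
    (hzero : ∀ z ∈ U, s z = 0 → g z = 0 ∧ deriv s z ≠ 0) :
    ∃ G : ℂ → ℂ, DifferentiableOn ℂ G U ∧ ∀ z ∈ U, G z * s z = g z := by
  classical
  set G : ℂ → ℂ := fun z => if s z = 0 then deriv g z / deriv s z else g z / s z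
  refine ⟨G, fun c hc => ?_, fun z hz => ?_⟩
  · refine DifferentiableAt.differentiableWithinAt ?_
    by_cases hsc : s c = 0
    · obtain ⟨hgc, hs'c⟩ := hzero c hc hsc
      have hslope : ∀ f : ℂ → ℂ, DifferentiableOn ℂ f U → DifferentiableAt ℂ (dslope f c) c :=
        fun f hf => ((Complex.differentiableOn_dslope (hU.mem_nhds hc)).2 hf).differentiableAt
          (hU.mem_nhds hc)
      have hne : ∀ᶠ w in 𝓝 c, dslope s c w ≠ 0 :=
        (hslope s hs).continuousAt.eventually_ne (by rwa [dslope_same])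
      refine ((hslope g hg).div (hslope s hs) hne.self_of_nhds).congr_of_eventuallyEq ?_
      filter_upwards [hne] with w hw
      rcases eq_or_ne w c with rfl | hwc
      · simp [G, hsc, dslope_same]
      · have hfactor : ∀ f : ℂ → ℂ, f c = 0 → f w = (w - c) * dslope f c w := fun f hf => by
          rw [← smul_eq_mul, sub_smul_dslope, hf, sub_zero]
        have hsw : s w ≠ 0 := by
          rw [hfactor s hsc]; exact mul_ne_zero (sub_ne_zero.2 hwc) hw
        simp only [G, if_neg hsw]
        rw [hfactor s hsc, hfactor g hgc, mul_div_mul_left _ _ (sub_ne_zero.2 hwc),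
          Pi.div_apply]
    · have hne : ∀ᶠ w in 𝓝 c, s w ≠ 0 :=
        ((hs.differentiableAt (hU.mem_nhds hc)).continuousAt).eventually_ne hsc
      refine ((hg.differentiableAt (hU.mem_nhds hc)).div
        (hs.differentiableAt (hU.mem_nhds hc)) hsc).congr_of_eventuallyEq ?_
      filter_upwards [hne] with w hw
      simp [G, hw]
  · by_cases hsz : s z = 0
    · simp [hsz, (hzero z hz hsz).1]
    · simp only [G, if_neg hsz]
      exact div_mul_cancel₀ _ hsz

lemma exists_differentiableOn_mul_sin_pi_eq {g : ℂ → ℂ}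
    (hg : DifferentiableOn ℂ g {z | -1 < z.re}) (hzero : ∀ n : ℕ, g n = 0) :
    ∃ G : ℂ → ℂ, DifferentiableOn ℂ G {z | -1 < z.re} ∧
      ∀ z : ℂ, -1 < z.re → G z * sin (π * z) = g z := by
  have hderiv : ∀ z : ℂ, HasDerivAt (fun w => sin (π * w)) (cos (π * z) * π) z := fun z =>
    ((hasDerivAt_id z).const_mul (π : ℂ)).csin.congr_deriv (by simp)
  refine exists_differentiableOn_mul_eq_of_simple_zeros
    (isOpen_lt continuous_const continuous_re) hg
    (fun z _ => (hderiv z).differentiableAt.differentiableWithinAt) fun z hz hsz => ⟨?_, ?_⟩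
  · obtain ⟨k, rfl⟩ := sin_pi_mul_eq_zero_iff.1 hsz
    have hk : (-1 : ℤ) < k := by exact_mod_cast (by simpa using hz.out : (-1 : ℝ) < k)
    lift k to ℕ using (by omega)
    simpa using hzero k
  · rw [(hderiv z).deriv]
    have hcos : cos (π * z) ≠ 0 := fun hcos => by
      simpa [hcos, hsz] using cos_sq_add_sin_sq (π * z)
    exact mul_ne_zero hcos (ofReal_ne_zero.2 Real.pi_ne_zero)

lemma one_le_norm_intCast_sub_intCast {m n : ℤ} (h : m ≠ n) : 1 ≤ ‖(m : ℂ) - n‖ := by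
  rw [← Int.cast_sub, norm_intCast]
  exact_mod_cast Int.one_le_abs (sub_ne_zero.2 h)

lemma norm_le_of_norm_le_away_from_integers {G : ℂ → ℂ} {φ : ℝ → ℝ}
    (hG : DifferentiableOn ℂ G {z | -1 < z.re}) (hφ : Monotone φ)
    (hfar : ∀ w : ℂ, -1 < w.re → (∀ n : ℤ, 1 / 4 ≤ ‖w - n‖) → ‖G w‖ ≤ φ ‖w‖)
    {z : ℂ} (hz : 0 ≤ z.re) : ‖G z‖ ≤ φ (‖z‖ + 1 / 2) := by
  by_cases hz_far : ∀ n : ℤ, 1 / 4 ≤ ‖z - n‖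
  · exact (hfar z (by linarith) hz_far).trans (hφ (by linarith))
  push Not at hz_far
  obtain ⟨n, hn⟩ := hz_far
  have hnz : ‖(n : ℂ) - z‖ < 1 / 4 := by rwa [norm_sub_rev]
  have hclose : ∀ w ∈ closedBall (n : ℂ) (1 / 4), ‖w - z‖ < 1 / 2 := fun w hw => by
    have := norm_sub_le_norm_sub_add_norm_sub w n z
    rw [mem_closedBall, dist_eq] at hw
    linarith
  have hball : closedBall (n : ℂ) (1 / 4) ⊆ {w | -1 < w.re} := fun w hw => by
    have h1 := abs_re_le_norm (w - z)
    have h2 := hclose w hw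
    rw [sub_re, abs_le] at h1
    show -1 < w.re
    linarith [h1.1]
  have hbdry : ∀ w ∈ frontier (ball (n : ℂ) (1 / 4)), ‖G w‖ ≤ φ (‖z‖ + 1 / 2) := fun w hw => by
    rw [frontier_ball _ (by norm_num), mem_sphere, dist_eq] at hw
    have hw_far : ∀ m : ℤ, 1 / 4 ≤ ‖w - m‖ := fun m => by
      rcases eq_or_ne n m with rfl | hnm
      · exact hw.ge
      · have := norm_sub_le_norm_sub_add_norm_sub (n : ℂ) w m
        rw [norm_sub_rev (n : ℂ) w, hw] at this
        linarith [one_le_norm_intCast_sub_intCast hnm]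
    have hwz : ‖w‖ ≤ ‖z‖ + 1 / 2 := by
      have := norm_le_norm_add_norm_sub' w z
      linarith [hclose w (sphere_subset_closedBall (by rwa [mem_sphere, dist_eq]))]
    exact (hfar w (hball (sphere_subset_closedBall (by rwa [mem_sphere, dist_eq]))) hw_far).trans
      (hφ hwz)
  refine norm_le_of_forall_mem_frontier_norm_le isBounded_ball ?_ hbdry
    (subset_closure (by rwa [mem_ball, dist_eq]))
  exact (hG.mono ((closure_ball _ (by norm_num)).subset.trans hball)).diffContOnCl

section QuotientBySinPi

variable {G : ℂ → ℂ} {A τ : ℝ}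

lemma norm_le_of_norm_mul_sin_pi_le (hG : DifferentiableOn ℂ G {z | -1 < z.re}) (hA : 0 ≤ A)
    (hτ : 0 ≤ τ) (hbound : ∀ z : ℂ, -1 < z.re → ‖G z * sin (π * z)‖ ≤ A * rexp (τ * (‖z‖ + 1)))
    {z : ℂ} (hz : 0 ≤ z.re) : ‖G z‖ ≤ 2 * A * rexp (3 / 2 * τ) * rexp (τ * ‖z‖) := by
  have hmono : Monotone fun t => 2 * A * rexp (τ * (t + 1)) := fun s t hst => by
    dsimp only
    gcongr
  have h := norm_le_of_norm_le_away_from_integers hG hmono (fun w hw hw_far => by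
    have hsin := half_le_norm_sin_pi_mul hw_far
    have hGw := hbound w hw
    rw [norm_mul] at hGw
    nlinarith [norm_nonneg (G w)]) hz
  rwa [mul_assoc, ← Real.exp_add, show 3 / 2 * τ + τ * ‖z‖ = τ * (‖z‖ + 1 / 2 + 1) by ring]

lemma norm_le_on_imaginary_axis_of_norm_mul_sin_pi_le
    (hG : DifferentiableOn ℂ G {z | -1 < z.re}) (hA : 0 ≤ A) (hτ : 0 ≤ τ)
    (hbound : ∀ z : ℂ, -1 < z.re → ‖G z * sin (π * z)‖ ≤ A * rexp (τ * (‖z‖ + 1))) (y : ℝ) :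
    ‖G (y * I)‖ ≤ 4 * A * rexp (3 * τ + π) * rexp (-((π - τ) * |y|)) := by
  have hy : ‖(y : ℂ) * I‖ = |y| := by simp
  rw [mul_assoc, ← Real.exp_add]
  rcases le_or_gt |y| 1 with hy1 | hy1
  · have h := norm_le_of_norm_mul_sin_pi_le hG hA hτ hbound (z := y * I) (by simp)
    rw [hy, mul_assoc, ← Real.exp_add] at h
    exact h.trans (mul_le_mul (by linarith) (Real.exp_le_exp.2 (by nlinarith [Real.pi_pos]))
      (Real.exp_pos _).le (by positivity))
  · have hsin : rexp (π * |y|) / 4 ≤ ‖sin (π * (y * I))‖ := by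
      have h := abs_sinh_im_le_norm_sin (π * (y * I))
      rw [im_ofReal_mul, mul_I_im, ofReal_re] at h
      refine le_trans ?_ h
      have := Real.exp_abs_div_four_le_abs_sinh (t := π * y)
        (by rw [abs_mul, abs_of_pos Real.pi_pos]; nlinarith [Real.pi_gt_three])
      rwa [abs_mul, abs_of_pos Real.pi_pos] at this
    have h := hbound (y * I) (by simp)
    rw [norm_mul, hy] at h
    have h' : ‖G (y * I)‖ * rexp (π * |y|) ≤ 4 * A * rexp (τ * (|y| + 1)) := by
      nlinarith [norm_nonneg (G (y * I))]
    rw [← le_div_iff₀ (Real.exp_pos _), mul_div_assoc, ← Real.exp_sub] at h'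
    refine h'.trans ?_
    gcongr
    nlinarith [Real.pi_pos]

end QuotientBySinPi

lemma Complex.neg_pi_div_two_mul_norm_le_re_mul_log_one_add {z : ℂ} (hz : 0 ≤ z.re) :
    -(π / 2 * ‖z‖) ≤ (z * log (1 + z)).re := by
  have hre : 1 ≤ (1 + z).re := by simp [hz]
  rw [mul_re, log_re, log_im]
  have hlog : 0 ≤ z.re * Real.log ‖1 + z‖ :=
    mul_nonneg hz (Real.log_nonneg (hre.trans (re_le_norm _)))
  have harg : |z.im * arg (1 + z)| ≤ ‖z‖ * (π / 2) := by
    rw [abs_mul]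
    exact mul_le_mul (abs_im_le_norm z) (abs_arg_le_pi_div_two_iff.2 (by linarith))
      (abs_nonneg _) (norm_nonneg z)
  linarith [le_abs_self (z.im * arg (1 + z))]

lemma Complex.re_ofReal_mul_log_one_add {x : ℝ} (hx : 0 ≤ x) :
    ((x : ℂ) * log (1 + x)).re = x * Real.log (1 + x) := by
  rw [← ofReal_one, ← ofReal_add, ← ofReal_log (by linarith), ← ofReal_mul, ofReal_re]

lemma differentiableOn_mul_log_one_add :
    DifferentiableOn ℂ (fun z : ℂ => z * log (1 + z)) {z | -1 < z.re} := fun z hz => by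
  have hslit : 1 + z ∈ slitPlane :=
    mem_slitPlane_iff.2 (Or.inl (by simp only [add_re, one_re]; linarith [hz.out]))
  exact (differentiableAt_id.mul (((differentiableAt_const 1).add differentiableAt_id).clog
    hslit)).differentiableWithinAt

lemma Real.tendsto_exp_mul_sub_mul_log_one_add (b : ℝ) {ε : ℝ} (hε : 0 < ε) :
    Tendsto (fun x => rexp ((b - ε * Real.log (1 + x)) * x)) atTop (𝓝 0) := by
  have hlog : Tendsto (fun x => ε * Real.log (1 + x)) atTop atTop :=
    (tendsto_log_atTop.comp (tendsto_atTop_add_const_left atTop 1 tendsto_id)).const_mul_atTop hε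
  have hcoef : Tendsto (fun x => b - ε * Real.log (1 + x)) atTop atBot := by
    simpa only [sub_eq_add_neg, Function.comp_def] using tendsto_atBot_add_const_left atTop b
      (tendsto_neg_atTop_atBot.comp hlog)
  exact tendsto_exp_atBot.comp (hcoef.atBot_mul_atTop₀ tendsto_id)

theorem eq_zero_on_right_half_plane_of_exp_decay_on_imaginary_axis {G : ℂ → ℂ} {B C D δ : ℝ} (hδ : 0 < δ)
    (hd : DiffContOnCl ℂ G {z | 0 < z.re})
    (hgrowth : ∀ z : ℂ, 0 ≤ z.re → ‖G z‖ ≤ C * rexp (B * ‖z‖))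
    (him : ∀ y : ℝ, ‖G (y * I)‖ ≤ D * rexp (-(δ * |y|))) :
    EqOn G 0 {z | 0 ≤ z.re} := by
  set ε : ℝ := 2 * δ / π with hε_def
  have hε : 0 < ε := by positivity
  have hεπ : ε * (π / 2) = δ := by rw [hε_def]; field_simp
  set H : ℂ → ℂ := fun z => cexp (-(ε * (z * log (1 + z)))) * G z
  have hnormH : ∀ z, ‖H z‖ = rexp (-(ε * (z * log (1 + z)).re)) * ‖G z‖ := fun z => by
    rw [norm_mul, norm_exp, neg_re, re_ofReal_mul]
  have hweight : ∀ z : ℂ, 0 ≤ z.re → ‖H z‖ ≤ rexp (δ * ‖z‖) * ‖G z‖ := fun z hz => by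
    have := neg_pi_div_two_mul_norm_le_re_mul_log_one_add hz
    rw [hnormH]
    gcongr
    rw [← hεπ]
    nlinarith
  have hHd : DiffContOnCl ℂ H {z | 0 < z.re} := by
    have hexp : DiffContOnCl ℂ (fun z => cexp (-(ε * (z * Complex.log (1 + z)))))
        {z | 0 < z.re} := by
      refine DifferentiableOn.diffContOnCl ?_
      rw [closure_setOfPred_lt_re]
      refine (differentiableOn_mul_log_one_add.const_mul _).neg.cexp.mono fun z hz => ?_
      simp only [mem_ofPred_eq] at hz ⊢
      linarith
    exact hexp.smul hd
  suffices hH0 : EqOn H 0 {z | 0 ≤ z.re} from fun z hz => by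
    simpa [H, Complex.exp_ne_zero] using hH0 hz
  refine PhragmenLindelof.eq_zero_on_right_half_plane_of_superexponential_decay hHd
    ⟨1, one_lt_two, δ + B, IsBigO.of_bound C ?_⟩ (fun n => ?_) ⟨D, fun y => ?_⟩
  · filter_upwards [mem_inf_of_right (mem_principal_self _)] with z hz
    rw [Real.rpow_one, Real.norm_eq_abs, Real.abs_exp, add_mul, Real.exp_add, mul_left_comm]
    exact (hweight z (le_of_lt hz)).trans
      (mul_le_mul_of_nonneg_left (hgrowth z (le_of_lt hz)) (Real.exp_pos _).le)
  · have hbound : ∀ x : ℝ, 0 ≤ x →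
        rexp x ^ n * ‖H x‖ ≤ C * rexp ((n + B - ε * Real.log (1 + x)) * x) := fun x hx => by
      have hGx := hgrowth x (by simpa using hx)
      rw [norm_real, Real.norm_of_nonneg hx] at hGx
      rw [hnormH, re_ofReal_mul_log_one_add hx, ← Real.exp_nat_mul,
        show (n + B - ε * Real.log (1 + x)) * x = n * x + -(ε * (x * Real.log (1 + x))) + B * x by
          ring, Real.exp_add, Real.exp_add]
      have := mul_le_mul_of_nonneg_left hGx
        (by positivity : 0 ≤ rexp (n * x) * rexp (-(ε * (x * Real.log (1 + x)))))
      linarith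
    refine squeeze_zero' (Eventually.of_forall fun x => by positivity)
      ((eventually_ge_atTop 0).mono hbound) ?_
    simpa using (Real.tendsto_exp_mul_sub_mul_log_one_add (n + B) hε).const_mul C
  · have hHy := hweight (y * I) (by simp)
    rw [show ‖(y : ℂ) * I‖ = |y| by simp] at hHy
    calc ‖H (y * I)‖ ≤ rexp (δ * |y|) * (D * rexp (-(δ * |y|))) :=
          hHy.trans (mul_le_mul_of_nonneg_left (him y) (Real.exp_pos _).le)
      _ = D := by rw [mul_left_comm, ← Real.exp_add, add_neg_cancel, Real.exp_zero, mul_one]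

lemma eqOn_zero_of_forall_one_le_re {f : ℂ → ℂ} (hcont : ContinuousOn f {z | 0 ≤ z.re})
    (hdiff : DifferentiableOn ℂ f {z | 0 < z.re}) (h : ∀ z : ℂ, 1 ≤ z.re → f z = 0) :
    EqOn f 0 {z | 0 ≤ z.re} := by
  have hnear : f =ᶠ[𝓝 2] 0 := by
    filter_upwards [(isOpen_lt continuous_const continuous_re).mem_nhds
      (by norm_num : (2 : ℂ) ∈ {z : ℂ | 1 < z.re})] with w hw
    exact h w (le_of_lt hw)
  have hEq := (hdiff.analyticOnNhd (isOpen_lt continuous_const continuous_re)).eqOn_zero_of_preconnected_of_eventuallyEq_zero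
    (convex_halfSpace_re_gt 0).isPreconnected (by norm_num) hnear
  refine hEq.of_subset_closure hcont continuousOn_const (fun z (hz : 0 < z.re) => hz.le) ?_
  rw [closure_setOfPred_lt_re]

theorem carlson_theorem (f : ℂ → ℂ)
    (hcont : ContinuousOn f {z : ℂ | 0 ≤ z.re})
    (hdiff : DifferentiableOn ℂ f {z : ℂ | 0 < z.re})
    (A τ : ℝ) (hA : 0 < A) (hτ0 : 0 ≤ τ) (hτ : τ < Real.pi)
    (hbound : ∀ z : ℂ, 0 ≤ z.re → ‖f z‖ ≤ A * Real.exp (τ * ‖z‖))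
    (hzero : ∀ n : ℕ, f (n : ℂ) = 0) :
    ∀ z : ℂ, 0 ≤ z.re → f z = 0 := by
  -- shifting by one puts the zero at the origin inside the domain of holomorphy
  set g : ℂ → ℂ := fun z => f (z + 1)
  have hg : DifferentiableOn ℂ g {z | -1 < z.re} := fun z hz =>
    (hdiff.comp (differentiableOn_id.add_const 1) fun w hw => by
      simp only [mem_ofPred_eq, add_re, one_re, id] at hw ⊢; linarith) z hz
  have hg_bound : ∀ z : ℂ, -1 < z.re → ‖g z‖ ≤ A * rexp (τ * (‖z‖ + 1)) := fun z hz => by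
    refine (hbound (z + 1) (by simp only [add_re, one_re]; linarith)).trans ?_
    gcongr
    exact norm_add_le z 1 |>.trans_eq (by simp)
  obtain ⟨G, hG, hGg⟩ := exists_differentiableOn_mul_sin_pi_eq hg fun n => by
    simpa [g] using hzero (n + 1)
  have hG_bound : ∀ z : ℂ, -1 < z.re → ‖G z * sin (π * z)‖ ≤ A * rexp (τ * (‖z‖ + 1)) :=
    fun z hz => hGg z hz ▸ hg_bound z hz
  have hGd : DiffContOnCl ℂ G {z | 0 < z.re} := by
    refine DifferentiableOn.diffContOnCl ?_
    rw [closure_setOfPred_lt_re]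
    exact hG.mono fun z hz => by simp only [mem_ofPred_eq] at hz ⊢; linarith
  have hG0 := eq_zero_on_right_half_plane_of_exp_decay_on_imaginary_axis (sub_pos.2 hτ) hGd
    (fun z hz => norm_le_of_norm_mul_sin_pi_le hG hA.le hτ0 hG_bound hz)
    (norm_le_on_imaginary_axis_of_norm_mul_sin_pi_le hG hA.le hτ0 hG_bound)
  refine eqOn_zero_of_forall_one_le_re hcont hdiff fun z hz => ?_
  have hz1 : 0 ≤ (z - 1).re := by simp only [sub_re, one_re]; linarith
  simpa [g, hG0 hz1] using (hGg (z - 1) (by linarith)).symm
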